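/- Let the Diaconis–Holmes–Neal sampler start at the basepoint j̃ = (+1, j*) and let T = inf{t ≥ 1 : X_t = j̃} be the first return time to j̃. Then the probability that T is finite and that no flip and no stationary move occurs before time T (i.e. every step of the excursion is a shift or a jump) is at least ((n−1)/n)^{2n}. -/

import Mathlib

open scoped Classical

/-- One-step transition probability of the Diaconis–Holmes–Neal sampler on
`{+1,-1} × {1,…,n}` (a state `(ε, j)` is encoded as `(ε, j-1) : Bool × Fin n`,
with `true` standing for `+1`). -/
noncomputable def dhnP (n : ℕ) (m : ℕ → ℝ) (s t : Bool × Fin n) : ℝ :=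
  let θ : ℝ := 1 / n
  let j : ℕ := (s.2 : ℕ) + 1
  let jn : ℕ := if s.1 then j + 1 else j - 1
  let r : ℝ := min 1 (m jn / m j)
  (if t.1 = s.1 ∧ (t.2 : ℕ) + 1 = jn then (1 - θ) * r else 0) +
  (if t.1 ≠ s.1 ∧ t.2 = s.2 then (1 - θ) * (1 - r) else 0) +
  (if t.1 ≠ s.1 ∧ (t.2 : ℕ) + 1 = jn then θ * r else 0) +
  (if t.1 = s.1 ∧ t.2 = s.2 then θ * (1 - r) else 0)

/-- A step of the chain from `u` to `v` is a *shift* (same sign, position changes) or a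
*jump* (sign changes, same position); otherwise it is a flip or a stationary move. -/
def shiftOrJump {n : ℕ} (u v : Bool × Fin n) : Prop :=
  (v.1 = u.1 ∧ v.2 ≠ u.2) ∨ (v.1 ≠ u.1 ∧ v.2 = u.2)

lemma sum_ite_le_of_subsingleton {α : Type*} [Fintype α] (P : α → Prop) [DecidablePred P]
    {c : ℝ} (hc : 0 ≤ c) (h : ∀ a b, P a → P b → a = b) :
    ∑ a : α, (if P a then c else 0) ≤ c := by
  have hcard : (Finset.univ.filter P).card ≤ 1 :=
    Finset.card_le_one.2 (fun a ha b hb => h a b (by simpa using ha) (by simpa using hb))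
  have heq : ∑ a : α, (if P a then c else 0) = (Finset.univ.filter P).card • c := by
    rw [Finset.sum_ite, Finset.sum_const, Finset.sum_const_zero, add_zero]
  rw [heq]
  rcases Nat.le_one_iff_eq_zero_or_eq_one.mp hcard with h' | h' <;> simp [h', hc]

section
variable {n : ℕ} {m : ℕ → ℝ}

lemma r_mem (hn : 3 ≤ n) (hm0 : m 0 = 0) (hmtop : m (n + 1) = 0)
    (hpos : ∀ j, 1 ≤ j → j ≤ n → 0 < m j) (j jn : ℕ) (hj1 : 1 ≤ j) (hj2 : j ≤ n)
    (hjn : jn ≤ n + 1) : 0 ≤ min 1 (m jn / m j) ∧ min 1 (m jn / m j) ≤ 1 := by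
  have hj : 0 < m j := hpos _ hj1 hj2
  have hjn' : 0 ≤ m jn := by
    rcases Nat.eq_zero_or_pos jn with h | h
    · rw [h, hm0]
    · rcases le_or_gt jn n with h2 | h2
      · exact (hpos _ h h2).le
      · have : jn = n + 1 := by omega
        rw [this, hmtop]
  exact ⟨le_min zero_le_one (div_nonneg hjn' hj.le), min_le_left _ _⟩

lemma r_mem' (hn : 3 ≤ n) (hm0 : m 0 = 0) (hmtop : m (n + 1) = 0)
    (hpos : ∀ j, 1 ≤ j → j ≤ n → 0 < m j) (u : Bool × Fin n) :
    0 ≤ min 1 (m (if u.1 then (u.2 : ℕ) + 1 + 1 else (u.2 : ℕ) + 1 - 1) / m ((u.2 : ℕ) + 1))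
    ∧ min 1 (m (if u.1 then (u.2 : ℕ) + 1 + 1 else (u.2 : ℕ) + 1 - 1) / m ((u.2 : ℕ) + 1)) ≤ 1 := by
  have h2 := u.2.2
  exact r_mem hn hm0 hmtop hpos _ _ (by omega) (by omega) (by split <;> omega)

lemma theta_mem (hn : 3 ≤ n) : (0:ℝ) ≤ 1/n ∧ (1:ℝ)/n ≤ 1 := by
  constructor
  · positivity
  · rw [div_le_one (by positivity)]
    exact_mod_cast Nat.one_le_iff_ne_zero.2 (by omega)

lemma dhnP_nonneg (hn : 3 ≤ n) (hm0 : m 0 = 0) (hmtop : m (n + 1) = 0)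
    (hpos : ∀ j, 1 ≤ j → j ≤ n → 0 < m j) (s t : Bool × Fin n) : 0 ≤ dhnP n m s t := by
  have hs2 := s.2.2
  have hA := r_mem hn hm0 hmtop hpos ((s.2:ℕ)+1) ((s.2:ℕ)+1+1) (by omega) (by omega) (by omega)
  have hB := r_mem hn hm0 hmtop hpos ((s.2:ℕ)+1) ((s.2:ℕ)+1-1) (by omega) (by omega) (by omega)
  obtain ⟨hθ0, hθ1⟩ := theta_mem (n := n) hn
  have h4 : (0:ℝ) ≤ 1 - 1/n := by linarith
  cases hs : s.1 <;>
    simp only [dhnP, hs, if_true, if_false, Bool.false_eq_true] <;>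
    refine add_nonneg (add_nonneg (add_nonneg ?_ ?_) ?_) ?_ <;>
    split_ifs <;>
    first
      | rfl
      | nlinarith [hA.1, hA.2, hB.1, hB.2]

lemma dhnP_step_bound (hn : 3 ≤ n) (hm0 : m 0 = 0) (hmtop : m (n + 1) = 0)
    (hpos : ∀ j, 1 ≤ j → j ≤ n → 0 < m j) (u : Bool × Fin n) :
    ∑ v : Bool × Fin n, (if shiftOrJump u v then dhnP n m u v else 0) ≤ 1 - 1/n := by
  obtain ⟨h0, h1⟩ := r_mem' hn hm0 hmtop hpos u
  obtain ⟨hθ0, hθ1⟩ := theta_mem (n := n) hn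
  have h4 : (0:ℝ) ≤ 1 - 1/n := by linarith
  set jn := if u.1 then (u.2 : ℕ) + 1 + 1 else (u.2 : ℕ) + 1 - 1 with hjn
  set r := min 1 (m jn / m ((u.2 : ℕ) + 1)) with hr
  have key : ∀ v : Bool × Fin n, (if shiftOrJump u v then dhnP n m u v else 0) ≤
      (if v.1 = u.1 ∧ (v.2 : ℕ) + 1 = jn then (1 - 1/n) * r else 0) +
      (if v.1 ≠ u.1 ∧ v.2 = u.2 then (1 - 1/n) * (1 - r) else 0) := by
    intro v
    by_cases hsj : shiftOrJump u v
    · rw [if_pos hsj]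
      have e4 : ¬(v.1 = u.1 ∧ v.2 = u.2) := by
        rcases hsj with ⟨hv1, hv2⟩ | ⟨hv1, hv2⟩
        · exact fun h => hv2 h.2
        · exact fun h => hv1 h.1
      have e3 : ¬(v.1 ≠ u.1 ∧ (v.2:ℕ) + 1 = jn) := by
        rcases hsj with ⟨hv1, hv2⟩ | ⟨hv1, hv2⟩
        · exact fun h => h.1 hv1
        · rintro ⟨-, h⟩
          rw [hv2] at h
          rw [hjn] at h
          revert h
          split <;> omega
      have : dhnP n m u v =
          (if v.1 = u.1 ∧ (v.2 : ℕ) + 1 = jn then (1 - 1/n) * r else 0) +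
          (if v.1 ≠ u.1 ∧ v.2 = u.2 then (1 - 1/n) * (1 - r) else 0) := by
        simp only [dhnP, ← hjn, ← hr, if_neg e3, if_neg e4, add_zero]
      rw [this]
    · rw [if_neg hsj]
      refine add_nonneg ?_ ?_ <;> split <;> first | rfl | nlinarith
  calc ∑ v : Bool × Fin n, (if shiftOrJump u v then dhnP n m u v else 0)
      ≤ ∑ v : Bool × Fin n, ((if v.1 = u.1 ∧ (v.2 : ℕ) + 1 = jn then (1 - 1/n) * r else 0) +
        (if v.1 ≠ u.1 ∧ v.2 = u.2 then (1 - 1/n) * (1 - r) else 0)) :=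
        Finset.sum_le_sum fun v _ => key v
    _ = (∑ v : Bool × Fin n, if v.1 = u.1 ∧ (v.2 : ℕ) + 1 = jn then (1 - 1/n) * r else 0) +
        (∑ v : Bool × Fin n, if v.1 ≠ u.1 ∧ v.2 = u.2 then (1 - 1/n) * (1 - r) else 0) :=
        Finset.sum_add_distrib
    _ ≤ (1 - 1/n) * r + (1 - 1/n) * (1 - r) := by
        gcongr ?_ + ?_
        · refine sum_ite_le_of_subsingleton _ (by nlinarith) ?_
          rintro ⟨a1, a2⟩ ⟨b1, b2⟩ ⟨ha1, ha2⟩ ⟨hb1, hb2⟩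
          simp only at *
          ext
          · rw [ha1, hb1]
          · simp only [Fin.ext_iff]; omega
        · refine sum_ite_le_of_subsingleton _ (by nlinarith) ?_
          rintro ⟨a1, a2⟩ ⟨b1, b2⟩ ⟨ha1, ha2⟩ ⟨hb1, hb2⟩
          simp only at *
          ext
          · revert ha1 hb1; cases u.1 <;> cases a1 <;> cases b1 <;> simp
          · rw [ha2, hb2]
    _ = 1 - 1/n := by ring
end

noncomputable def dhnF (n : ℕ) (m : ℕ → ℝ) (k : ℕ) (u : Bool × Fin n) : ℝ :=
  ∑ w : Fin (k+1) → Bool × Fin n,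
    if w 0 = u ∧ (∀ i : Fin k, shiftOrJump (w i.castSucc) (w i.succ))
    then ∏ i : Fin k, dhnP n m (w i.castSucc) (w i.succ) else 0

lemma dhnF_zero (n : ℕ) (m : ℕ → ℝ) (u : Bool × Fin n) : dhnF n m 0 u = 1 := by
  unfold dhnF
  rw [← (Equiv.funUnique (Fin 1) (Bool × Fin n)).symm.sum_comp]
  simp [Equiv.funUnique]

lemma dhnF_succ (n : ℕ) (m : ℕ → ℝ) (k : ℕ) (u : Bool × Fin n) :
    dhnF n m (k+1) u = ∑ b : Bool × Fin n,
      (if shiftOrJump u b then dhnP n m u b else 0) * dhnF n m k b := by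
  unfold dhnF
  rw [← (Fin.consEquiv (fun _ : Fin (k+2) => Bool × Fin n)).sum_comp]
  rw [Fintype.sum_prod_type]
  have hce : ∀ p : (Bool × Fin n) × (Fin (k+1) → Bool × Fin n),
      (Fin.consEquiv fun _ : Fin (k+2) => Bool × Fin n) p = Fin.cons p.1 p.2 := fun p => rfl
  simp only [hce]
  have step1 : ∀ (a : Bool × Fin n) (g : Fin (k+1) → Bool × Fin n),
      (if (Fin.cons a g : Fin (k+2) → Bool × Fin n) 0 = u ∧
          (∀ i : Fin (k+1), shiftOrJump ((Fin.cons a g : Fin (k+2) → Bool × Fin n) i.castSucc)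
            ((Fin.cons a g : Fin (k+2) → Bool × Fin n) i.succ))
       then ∏ i : Fin (k+1), dhnP n m ((Fin.cons a g : Fin (k+2) → Bool × Fin n) i.castSucc)
            ((Fin.cons a g : Fin (k+2) → Bool × Fin n) i.succ) else 0) =
      (if a = u ∧ shiftOrJump a (g 0) ∧
          (∀ i : Fin k, shiftOrJump (g i.castSucc) (g i.succ))
       then dhnP n m a (g 0) * ∏ i : Fin k, dhnP n m (g i.castSucc) (g i.succ) else 0) := by
    intro a g
    have hc : ∀ i : Fin (k+1),
        ((Fin.cons a g : Fin (k+2) → Bool × Fin n) i.castSucc,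
         (Fin.cons a g : Fin (k+2) → Bool × Fin n) i.succ) =
        (Fin.cases a (fun j : Fin k => g j.castSucc) i, g i) := by
      intro i
      induction i using Fin.cases with
      | zero => simp
      | succ i => simp [← Fin.succ_castSucc]
    congr 1
    · rw [eq_iff_iff]
      apply and_congr
      · simp
      · rw [Fin.forall_fin_succ]
        apply and_congr
        · simp
        · apply forall_congr'
          intro i
          have h1 := hc i.succ
          simp only [Prod.mk.injEq] at h1
          rw [h1.1, h1.2]
          try simp
    · rw [Fin.prod_univ_succ]
      refine congrArg₂ (· * ·) (by simp) ?_
      apply Finset.prod_congr rfl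
      intro i _
      have h1 := hc i.succ
      simp only [Prod.mk.injEq] at h1
      rw [h1.1, h1.2]
      try simp
  calc ∑ a : Bool × Fin n, ∑ g : Fin (k+1) → Bool × Fin n, _
      = ∑ a : Bool × Fin n, ∑ g : Fin (k+1) → Bool × Fin n,
        (if a = u then (if shiftOrJump a (g 0) ∧
          (∀ i : Fin k, shiftOrJump (g i.castSucc) (g i.succ))
         then dhnP n m a (g 0) * ∏ i : Fin k, dhnP n m (g i.castSucc) (g i.succ) else 0) else 0) := by
        apply Finset.sum_congr rfl; intro a _
        apply Finset.sum_congr rfl; intro g _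
        rw [step1 a g, ite_and]
    _ = ∑ g : Fin (k+1) → Bool × Fin n,
        (if shiftOrJump u (g 0) ∧ (∀ i : Fin k, shiftOrJump (g i.castSucc) (g i.succ))
         then dhnP n m u (g 0) * ∏ i : Fin k, dhnP n m (g i.castSucc) (g i.succ) else 0) := by
        rw [Finset.sum_comm]
        apply Finset.sum_congr rfl; intro g _
        rw [Finset.sum_ite_eq' Finset.univ u]
        simp
    _ = ∑ g : Fin (k+1) → Bool × Fin n, ∑ b : Bool × Fin n,
        (if g 0 = b then
          (if shiftOrJump u b ∧ (∀ i : Fin k, shiftOrJump (g i.castSucc) (g i.succ))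
           then dhnP n m u b * ∏ i : Fin k, dhnP n m (g i.castSucc) (g i.succ) else 0) else 0) := by
        apply Finset.sum_congr rfl; intro g _
        rw [Finset.sum_ite_eq Finset.univ (g 0)]
        simp
    _ = ∑ b : Bool × Fin n, ∑ g : Fin (k+1) → Bool × Fin n,
        (if shiftOrJump u b then dhnP n m u b else 0) *
        (if g 0 = b ∧ (∀ i : Fin k, shiftOrJump (g i.castSucc) (g i.succ))
         then ∏ i : Fin k, dhnP n m (g i.castSucc) (g i.succ) else 0) := by
        rw [Finset.sum_comm]
        apply Finset.sum_congr rfl; intro b _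
        apply Finset.sum_congr rfl; intro g _
        by_cases h0 : g 0 = b
        · subst h0
          rw [if_pos rfl]
          by_cases h1 : shiftOrJump u (g 0) <;>
            by_cases h2 : (∀ i : Fin k, shiftOrJump (g i.castSucc) (g i.succ)) <;>
            simp [h1, h2]
        · simp [h0]
    _ = ∑ b : Bool × Fin n,
        (if shiftOrJump u b then dhnP n m u b else 0) * dhnF n m k b := by
        apply Finset.sum_congr rfl; intro b _
        rw [← Finset.mul_sum]
        rfl


lemma dhnF_nonneg {n : ℕ} {m : ℕ → ℝ} (hn : 3 ≤ n) (hm0 : m 0 = 0) (hmtop : m (n + 1) = 0)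
    (hpos : ∀ j, 1 ≤ j → j ≤ n → 0 < m j) (k : ℕ) (u : Bool × Fin n) :
    0 ≤ dhnF n m k u := by
  unfold dhnF
  apply Finset.sum_nonneg
  intro w _
  split
  · exact Finset.prod_nonneg fun i _ => dhnP_nonneg hn hm0 hmtop hpos _ _
  · rfl

lemma dhnF_le {n : ℕ} {m : ℕ → ℝ} (hn : 3 ≤ n) (hm0 : m 0 = 0) (hmtop : m (n + 1) = 0)
    (hpos : ∀ j, 1 ≤ j → j ≤ n → 0 < m j) (k : ℕ) (u : Bool × Fin n) :
    dhnF n m k u ≤ (1 - 1/n)^k := by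
  induction k generalizing u with
  | zero => rw [dhnF_zero]; norm_num
  | succ k ih =>
    rw [dhnF_succ]
    have hite : ∀ b : Bool × Fin n, 0 ≤ (if shiftOrJump u b then dhnP n m u b else 0) := by
      intro b
      split
      · exact dhnP_nonneg hn hm0 hmtop hpos _ _
      · rfl
    calc ∑ b : Bool × Fin n, (if shiftOrJump u b then dhnP n m u b else 0) * dhnF n m k b
        ≤ ∑ b : Bool × Fin n, (if shiftOrJump u b then dhnP n m u b else 0) * (1 - 1/n)^k :=
          Finset.sum_le_sum fun b _ => mul_le_mul_of_nonneg_left (ih b) (hite b)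
      _ = (∑ b : Bool × Fin n, (if shiftOrJump u b then dhnP n m u b else 0)) * (1 - 1/n)^k :=
          (Finset.sum_mul ..).symm
      _ ≤ (1 - 1/n) * (1 - 1/n)^k := by
          apply mul_le_mul_of_nonneg_right (dhnP_step_bound hn hm0 hmtop hpos u)
          apply pow_nonneg
          have := (theta_mem (n := n) hn).2
          linarith
      _ = (1 - 1/n)^(k+1) := by rw [pow_succ, mul_comm]

lemma dhnP_shift_up (n : ℕ) (m : ℕ → ℝ) (p : ℕ) (hp : p < n) (hp1 : p + 1 < n) :
    dhnP n m (true, ⟨p, hp⟩) (true, ⟨p+1, hp1⟩)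
      = (1 - 1/n) * min 1 (m (p+2) / m (p+1)) := by
  simp [dhnP, Fin.ext_iff]

lemma dhnP_jump_up (n : ℕ) (m : ℕ → ℝ) (p : ℕ) (hp : p < n) :
    dhnP n m (true, ⟨p, hp⟩) (false, ⟨p, hp⟩)
      = (1 - 1/n) * (1 - min 1 (m (p+2) / m (p+1))) := by
  simp [dhnP, Fin.ext_iff]

lemma dhnP_shift_down (n : ℕ) (m : ℕ → ℝ) (p : ℕ) (hp : p < n) (hp1 : p + 1 < n) :
    dhnP n m (false, ⟨p+1, hp1⟩) (false, ⟨p, hp⟩)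
      = (1 - 1/n) * min 1 (m (p+1) / m (p+2)) := by
  simp [dhnP, Fin.ext_iff]

lemma dhnP_jump_down (n : ℕ) (m : ℕ → ℝ) (p : ℕ) (hp : p < n) :
    dhnP n m (false, ⟨p, hp⟩) (true, ⟨p, hp⟩)
      = (1 - 1/n) * (1 - min 1 (m p / m (p+1))) := by
  simp [dhnP, Fin.ext_iff]

-- generalized move lemmas
lemma dhnP_shift_up' (n : ℕ) (m : ℕ → ℝ) (p q : Fin n) (h : (q:ℕ) = (p:ℕ) + 1) :
    dhnP n m (true, p) (true, q) = (1 - 1/n) * min 1 (m ((p:ℕ)+2) / m ((p:ℕ)+1)) := by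
  rcases p with ⟨p, hp⟩; rcases q with ⟨q, hq⟩
  simp only [Fin.val_mk] at h; subst h
  exact dhnP_shift_up n m p hp hq

lemma dhnP_jump_up' (n : ℕ) (m : ℕ → ℝ) (p q : Fin n) (h : (q:ℕ) = (p:ℕ)) :
    dhnP n m (true, p) (false, q) = (1 - 1/n) * (1 - min 1 (m ((p:ℕ)+2) / m ((p:ℕ)+1))) := by
  rcases p with ⟨p, hp⟩; rcases q with ⟨q, hq⟩
  simp only [Fin.val_mk] at h; subst h
  exact dhnP_jump_up n m q hq

lemma dhnP_shift_down' (n : ℕ) (m : ℕ → ℝ) (p q : Fin n) (h : (p:ℕ) = (q:ℕ) + 1) :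
    dhnP n m (false, p) (false, q) = (1 - 1/n) * min 1 (m ((q:ℕ)+1) / m ((q:ℕ)+2)) := by
  rcases p with ⟨p, hp⟩; rcases q with ⟨q, hq⟩
  simp only [Fin.val_mk] at h; subst h
  exact dhnP_shift_down n m q hq hp

lemma dhnP_jump_down' (n : ℕ) (m : ℕ → ℝ) (p q : Fin n) (h : (q:ℕ) = (p:ℕ)) :
    dhnP n m (false, p) (true, q) = (1 - 1/n) * (1 - min 1 (m (p:ℕ) / m ((p:ℕ)+1))) := by
  rcases p with ⟨p, hp⟩; rcases q with ⟨q, hq⟩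
  simp only [Fin.val_mk] at h; subst h
  exact dhnP_jump_down n m q hq

lemma sj_shift {n : ℕ} (x : Bool) (p q : Fin n) (h : (p:ℕ) ≠ (q:ℕ)) :
    shiftOrJump (x, p) (x, q) :=
  Or.inl ⟨rfl, by simp [Fin.ext_iff]; omega⟩

lemma sj_jump {n : ℕ} (x y : Bool) (p q : Fin n) (hxy : x ≠ y) (h : p = q) :
    shiftOrJump (x, p) (y, q) :=
  Or.inr ⟨fun hh => hxy hh.symm, h.symm⟩

/-- position (0-indexed) along the excursion path -/
def dpos (a b c k : ℕ) : ℕ :=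
  if k ≤ b - a then a + k
  else if k ≤ 2*b - a - c + 1 then 2*b + 1 - a - k
  else c + (k - (2*b - a - c + 2))

def dsgn (a b c k : ℕ) : Bool :=
  decide (k ≤ b - a) || decide (2*b - a - c + 1 < k)

def dpath (n : ℕ) (hn : 0 < n) (a b c k : ℕ) : Bool × Fin n :=
  (dsgn a b c k, ⟨dpos a b c k % n, Nat.mod_lt _ hn⟩)

lemma dpath_eval_lo {n : ℕ} (hn : 0 < n) {a b c k : ℕ} (hab : a ≤ b) (hbn : b < n)
    (hk : k ≤ b - a) : dpath n hn a b c k = (true, ⟨a + k, by omega⟩) := by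
  unfold dpath dsgn dpos
  have h2 : (a + k) % n = a + k := Nat.mod_eq_of_lt (by omega)
  simp [hk, h2]

lemma dpath_eval_mid {n : ℕ} (hn : 0 < n) {a b c k : ℕ} (hc : c ≤ a) (hab : a ≤ b)
    (hbn : b < n) (hk1 : b - a < k) (hk2 : k ≤ 2*b - a - c + 1) :
    dpath n hn a b c k = (false, ⟨2*b + 1 - a - k, by omega⟩) := by
  unfold dpath dsgn dpos
  have h2 : (2*b + 1 - a - k) % n = 2*b + 1 - a - k := Nat.mod_eq_of_lt (by omega)
  have h3 : ¬ (k ≤ b - a) := by omega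
  have h4 : ¬ (2*b - a - c + 1 < k) := by omega
  simp [h3, h4, hk2, h2]

lemma dpath_eval_hi {n : ℕ} (hn : 0 < n) {a b c k : ℕ} (hc : c ≤ a) (hab : a ≤ b)
    (hbn : b < n) (hk1 : 2*b - a - c + 1 < k) (hk2 : k ≤ 2*(b-c) + 2) :
    dpath n hn a b c k = (true, ⟨c + (k - (2*b - a - c + 2)), by omega⟩) := by
  unfold dpath dsgn dpos
  have h2 : (c + (k - (2*b - a - c + 2))) % n = c + (k - (2*b - a - c + 2)) :=
    Nat.mod_eq_of_lt (by omega)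
  have h3 : ¬ (k ≤ b - a) := by omega
  have h4 : ¬ (k ≤ 2*b - a - c + 1) := by omega
  simp [h3, h4, hk1, h2]

noncomputable def dUP (m : ℕ → ℝ) (j : ℕ) : ℝ := min 1 (m (j+1) / m j)
noncomputable def dDN (m : ℕ → ℝ) (j : ℕ) : ℝ := min 1 (m (j-1) / m j)
noncomputable def dA (m : ℕ → ℝ) (a b : ℕ) : ℝ :=
  (∏ i ∈ Finset.range (b-a), dUP m (a+i+1)) * (1 - dUP m (b+1))
noncomputable def dB (m : ℕ → ℝ) (a c : ℕ) : ℝ :=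
  (∏ l ∈ Finset.range (a-c), dDN m (a-l+1)) * (1 - dDN m (c+1))

section Excursion
variable {n : ℕ} {m : ℕ → ℝ} (hn3 : 3 ≤ n) (hm0 : m 0 = 0) (hmtop : m (n + 1) = 0)
  (hpos : ∀ j, 1 ≤ j → j ≤ n → 0 < m j)

include hn3 hm0 hmtop hpos

lemma hm_nonneg : ∀ j, j ≤ n + 1 → 0 ≤ m j := by
  intro j hj
  rcases Nat.eq_zero_or_pos j with h | h
  · rw [h, hm0]
  · rcases le_or_gt j n with h2 | h2
    · exact (hpos _ h h2).le
    · have : j = n + 1 := by omega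
      rw [this, hmtop]

lemma dUP_mem (j : ℕ) (h1 : 1 ≤ j) (h2 : j ≤ n) : 0 ≤ dUP m j ∧ dUP m j ≤ 1 :=
  ⟨le_min zero_le_one (div_nonneg (hm_nonneg hn3 hm0 hmtop hpos _ (by omega))
    (hpos _ h1 h2).le), min_le_left _ _⟩

lemma dDN_mem (j : ℕ) (h1 : 1 ≤ j) (h2 : j ≤ n) : 0 ≤ dDN m j ∧ dDN m j ≤ 1 :=
  ⟨le_min zero_le_one (div_nonneg (hm_nonneg hn3 hm0 hmtop hpos _ (by omega))
    (hpos _ h1 h2).le), min_le_left _ _⟩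

lemma dA_nonneg {a b : ℕ} (hab : a ≤ b) (hbn : b < n) : 0 ≤ dA m a b := by
  apply mul_nonneg
  · apply Finset.prod_nonneg
    intro i hi
    rw [Finset.mem_range] at hi
    exact (dUP_mem hn3 hm0 hmtop hpos (a+i+1) (by omega) (by omega)).1
  · have := min_le_left (1:ℝ) (m (b+1+1) / m (b+1))
    simp only [dUP]
    linarith

lemma dB_nonneg {a c : ℕ} (hc : c ≤ a) (han : a < n) : 0 ≤ dB m a c := by
  apply mul_nonneg
  · apply Finset.prod_nonneg
    intro l hl
    rw [Finset.mem_range] at hl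
    exact (dDN_mem hn3 hm0 hmtop hpos (a-l+1) (by omega) (by omega)).1
  · have := min_le_left (1:ℝ) (m (c+1-1) / m (c+1))
    simp only [dDN]
    linarith

lemma sum_dA {a : ℕ} (han : a < n) :
    ∑ e ∈ Finset.range (n - a), dA m a (a + e) = 1 := by
  have key : ∀ e, dA m a (a+e) =
      (∏ i ∈ Finset.range e, dUP m (a+i+1)) - (∏ i ∈ Finset.range (e+1), dUP m (a+i+1)) := by
    intro e
    rw [dA, Finset.prod_range_succ, show a + e - a = e by omega]
    ring_nf
  calc ∑ e ∈ Finset.range (n - a), dA m a (a + e)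
      = ∑ e ∈ Finset.range (n - a), ((∏ i ∈ Finset.range e, dUP m (a+i+1)) -
          (∏ i ∈ Finset.range (e+1), dUP m (a+i+1))) := Finset.sum_congr rfl fun e _ => key e
    _ = (∏ i ∈ Finset.range 0, dUP m (a+i+1)) - (∏ i ∈ Finset.range (n-a), dUP m (a+i+1)) :=
        Finset.sum_range_sub' _ _
    _ = 1 := by
        rw [Finset.prod_range_zero, Finset.prod_eq_zero (Finset.mem_range.2 (show n-a-1 < n-a by omega))]
        · ring
        · rw [show a + (n-a-1) + 1 = n by omega, dUP, hmtop, zero_div]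
          simp

lemma sum_dB {a : ℕ} (han : a < n) :
    ∑ e ∈ Finset.range (a + 1), dB m a (a - e) = 1 := by
  have key : ∀ e, e ≤ a → dB m a (a-e) =
      (∏ l ∈ Finset.range e, dDN m (a-l+1)) - (∏ l ∈ Finset.range (e+1), dDN m (a-l+1)) := by
    intro e he
    rw [dB, Finset.prod_range_succ, show a - (a - e) = e by omega,
      show a - e + 1 = a - e + 1 by omega]
    ring
  calc ∑ e ∈ Finset.range (a+1), dB m a (a - e)
      = ∑ e ∈ Finset.range (a+1), ((∏ l ∈ Finset.range e, dDN m (a-l+1)) -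
          (∏ l ∈ Finset.range (e+1), dDN m (a-l+1))) :=
        Finset.sum_congr rfl fun e he => key e (by simpa [Nat.lt_succ_iff] using he)
    _ = (∏ l ∈ Finset.range 0, dDN m (a-l+1)) - (∏ l ∈ Finset.range (a+1), dDN m (a-l+1)) :=
        Finset.sum_range_sub' _ _
    _ = 1 := by
        rw [Finset.prod_range_zero, Finset.prod_eq_zero (Finset.mem_range.2 (show a < a+1 by omega))]
        · ring
        · rw [show a - a + 1 = 1 by omega, dDN]
          simp [hm0]

end Excursion

section Main
variable {n : ℕ} {m : ℕ → ℝ} (hn3 : 3 ≤ n) (hm0 : m 0 = 0) (hmtop : m (n + 1) = 0)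
  (hpos : ∀ j, 1 ≤ j → j ≤ n → 0 < m j)

include hn3 hm0 hmtop hpos in
lemma excursion_prod_ge (hn : 0 < n) (a b c : ℕ) (hc : c ≤ a) (hab : a ≤ b) (hbn : b < n)
    (hup' : ∀ j, 1 ≤ j → j ≤ a → m j ≤ m (j+1))
    (hdown' : ∀ j, a + 1 ≤ j → j < n → m (j+1) ≤ m j) :
    (1 - 1/(n:ℝ))^(2*n) * (dA m a b * dB m a c) ≤
      ∏ i ∈ Finset.range (2*(b-c)+2),
        dhnP n m (dpath n hn a b c i) (dpath n hn a b c (i+1)) := by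
  have hnr : (0:ℝ) < n := by positivity
  have hθ1 : (1:ℝ)/n ≤ 1 := by
    rw [div_le_one hnr]; exact_mod_cast Nat.one_le_iff_ne_zero.2 (by omega)
  have hθ0 : (0:ℝ) ≤ 1/n := by positivity
  have h40 : (0:ℝ) ≤ 1 - 1/n := by linarith
  have h41 : (1:ℝ) - 1/n ≤ 1 := by linarith
  have hUP1 : ∀ j, 1 ≤ j → j ≤ a → dUP m j = 1 := by
    intro j h1 h2
    exact min_eq_left ((one_le_div (hpos j h1 (by omega))).2 (hup' j h1 h2))
  have hDN1 : ∀ j, a + 2 ≤ j → j ≤ n → dDN m j = 1 := by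
    intro j h1 h2
    have hd := hdown' (j-1) (by omega) (by omega)
    rw [show j - 1 + 1 = j by omega] at hd
    exact min_eq_left ((one_le_div (hpos j (by omega) h2)).2 hd)
  have hsplit : 2*(b-c)+2 = (b-a) + (1 + ((b-c) + (1 + (a-c)))) := by omega
  set F : ℕ → ℝ := fun i => dhnP n m (dpath n hn a b c i) (dpath n hn a b c (i+1)) with hF
  have seg1 : ∏ x ∈ Finset.range (b-a), F x
      = (1-1/(n:ℝ))^(b-a) * ∏ i ∈ Finset.range (b-a), dUP m (a+i+1) := by
    have e : ∀ x ∈ Finset.range (b-a), F x = (1-1/(n:ℝ)) * dUP m (a+x+1) := by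
      intro x hx
      rw [Finset.mem_range] at hx
      simp only [hF]
      rw [dpath_eval_lo hn hab hbn (by omega), dpath_eval_lo hn hab hbn (by omega),
        dhnP_shift_up' n m _ _ (show a+(x+1) = (a+x)+1 by omega)]
      rfl
    rw [Finset.prod_congr rfl e, Finset.prod_mul_distrib, Finset.prod_const, Finset.card_range]
  have seg2 : F ((b-a)+0) = (1-1/(n:ℝ)) * (1 - dUP m (b+1)) := by
    simp only [hF]
    rw [dpath_eval_lo hn hab hbn (by omega),
      dpath_eval_mid hn hc hab hbn (by omega) (by omega)]
    have eb : ∀ (h : a + ((b-a)+0) < n), (⟨a + ((b-a)+0), h⟩ : Fin n) = ⟨b, by omega⟩ := by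
      intro h; simp only [Fin.mk.injEq]; omega
    have em : ∀ (h : 2*b+1-a-((b-a)+0+1) < n),
        (⟨2*b+1-a-((b-a)+0+1), h⟩ : Fin n) = ⟨b, by omega⟩ := by
      intro h; simp only [Fin.mk.injEq]; omega
    rw [eb, em, dhnP_jump_up' n m _ _ rfl]
    rfl
  have seg3 : ∏ x ∈ Finset.range (b-c), F ((b-a)+(1+x))
      = (1-1/(n:ℝ))^(b-c) * ∏ x ∈ Finset.range (b-c), dDN m (b-x+1) := by
    have e : ∀ x ∈ Finset.range (b-c), F ((b-a)+(1+x)) = (1-1/(n:ℝ)) * dDN m (b-x+1) := by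
      intro x hx
      rw [Finset.mem_range] at hx
      simp only [hF]
      rw [dpath_eval_mid hn hc hab hbn (by omega) (by omega),
        dpath_eval_mid hn hc hab hbn (by omega) (by omega)]
      have e1 : ∀ (h : 2*b+1-a-((b-a)+(1+x)) < n),
          (⟨2*b+1-a-((b-a)+(1+x)), h⟩ : Fin n) = ⟨(b-x-1)+1, by omega⟩ := by
        intro h; simp only [Fin.mk.injEq]; omega
      have e2 : ∀ (h : 2*b+1-a-((b-a)+(1+x)+1) < n),
          (⟨2*b+1-a-((b-a)+(1+x)+1), h⟩ : Fin n) = ⟨b-x-1, by omega⟩ := by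
        intro h; simp only [Fin.mk.injEq]; omega
      rw [e1, e2, dhnP_shift_down n m (b-x-1) (by omega) (by omega),
        show b-x-1+1 = b-x by omega, show b-x-1+2 = b-x+1 by omega]
      rfl
    rw [Finset.prod_congr rfl e, Finset.prod_mul_distrib, Finset.prod_const, Finset.card_range]
  have seg4 : F ((b-a)+(1+((b-c)+0))) = (1-1/(n:ℝ)) * (1 - dDN m (c+1)) := by
    simp only [hF]
    rw [dpath_eval_mid hn hc hab hbn (by omega) (by omega),
      dpath_eval_hi hn hc hab hbn (by omega) (by omega)]
    have e1 : ∀ (h : 2*b+1-a-((b-a)+(1+((b-c)+0))) < n),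
        (⟨2*b+1-a-((b-a)+(1+((b-c)+0))), h⟩ : Fin n) = ⟨c, by omega⟩ := by
      intro h; simp only [Fin.mk.injEq]; omega
    have e2 : ∀ (h : c + ((b-a)+(1+((b-c)+0))+1 - (2*b-a-c+2)) < n),
        (⟨c + ((b-a)+(1+((b-c)+0))+1 - (2*b-a-c+2)), h⟩ : Fin n) = ⟨c, by omega⟩ := by
      intro h; simp only [Fin.mk.injEq]; omega
    rw [e1, e2, dhnP_jump_down n m c (by omega)]
    rfl
  have seg5 : ∏ x ∈ Finset.range (a-c), F ((b-a)+(1+((b-c)+(1+x))))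
      = (1-1/(n:ℝ))^(a-c) := by
    have e : ∀ x ∈ Finset.range (a-c), F ((b-a)+(1+((b-c)+(1+x))))
        = (1-1/(n:ℝ)) * dUP m (c+x+1) := by
      intro x hx
      rw [Finset.mem_range] at hx
      simp only [hF]
      rw [dpath_eval_hi hn hc hab hbn (by omega) (by omega),
        dpath_eval_hi hn hc hab hbn (by omega) (by omega)]
      have e1 : ∀ (h : c + ((b-a)+(1+((b-c)+(1+x))) - (2*b-a-c+2)) < n),
          (⟨c + ((b-a)+(1+((b-c)+(1+x))) - (2*b-a-c+2)), h⟩ : Fin n) = ⟨c+x, by omega⟩ := by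
        intro h; simp only [Fin.mk.injEq]; omega
      have e2 : ∀ (h : c + ((b-a)+(1+((b-c)+(1+x)))+1 - (2*b-a-c+2)) < n),
          (⟨c + ((b-a)+(1+((b-c)+(1+x)))+1 - (2*b-a-c+2)), h⟩ : Fin n) = ⟨c+x+1, by omega⟩ := by
        intro h; simp only [Fin.mk.injEq]; omega
      rw [e1, e2, dhnP_shift_up n m (c+x) (by omega) (by omega)]
      rfl
    rw [Finset.prod_congr rfl e, Finset.prod_mul_distrib, Finset.prod_const, Finset.card_range]
    rw [Finset.prod_eq_one (fun x hx => hUP1 (c+x+1) (by omega)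
      (by rw [Finset.mem_range] at hx; omega)), mul_one]
  have seg3b : ∏ x ∈ Finset.range (b-c), dDN m (b-x+1)
      = ∏ l ∈ Finset.range (a-c), dDN m (a-l+1) := by
    rw [show b-c = (b-a)+(a-c) by omega, Finset.prod_range_add]
    rw [Finset.prod_eq_one (fun x hx => hDN1 (b-x+1)
      (by rw [Finset.mem_range] at hx; omega) (by omega)), one_mul]
    exact Finset.prod_congr rfl fun x _ => by rw [show b-((b-a)+x)+1 = a-x+1 by omega]
  have prodcomp : ∏ i ∈ Finset.range (2*(b-c)+2), F i
      = (1-1/(n:ℝ))^(2*(b-c)+2) * (dA m a b * dB m a c) := by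
    calc ∏ i ∈ Finset.range (2*(b-c)+2), F i
        = (∏ x ∈ Finset.range (b-a), F x) * (F ((b-a)+0) *
          ((∏ x ∈ Finset.range (b-c), F ((b-a)+(1+x))) *
           (F ((b-a)+(1+((b-c)+0))) *
            ∏ x ∈ Finset.range (a-c), F ((b-a)+(1+((b-c)+(1+x))))))) := by
          rw [hsplit, Finset.prod_range_add, Finset.prod_range_add, Finset.prod_range_one,
            Finset.prod_range_add, Finset.prod_range_add, Finset.prod_range_one]
      _ = ((1-1/(n:ℝ))^(b-a) * ∏ i ∈ Finset.range (b-a), dUP m (a+i+1)) *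
          (((1-1/(n:ℝ)) * (1 - dUP m (b+1))) *
           (((1-1/(n:ℝ))^(b-c) * ∏ l ∈ Finset.range (a-c), dDN m (a-l+1)) *
            (((1-1/(n:ℝ)) * (1 - dDN m (c+1))) * (1-1/(n:ℝ))^(a-c)))) := by
          rw [seg1, seg2, seg3, seg4, seg5, seg3b]
      _ = (1-1/(n:ℝ))^(2*(b-c)+2) * (dA m a b * dB m a c) := by
          simp only [dA, dB]
          rw [hsplit, pow_add, pow_add, pow_add, pow_add]
          ring
  calc (1-1/(n:ℝ))^(2*n) * (dA m a b * dB m a c)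
      ≤ (1-1/(n:ℝ))^(2*(b-c)+2) * (dA m a b * dB m a c) := by
        apply mul_le_mul_of_nonneg_right (pow_le_pow_of_le_one h40 h41 (by omega))
        exact mul_nonneg (dA_nonneg hn3 hm0 hmtop hpos hab hbn)
          (dB_nonneg hn3 hm0 hmtop hpos hc (by omega))
    _ = ∏ i ∈ Finset.range (2*(b-c)+2), F i := prodcomp.symm

end Main

-- path condition lemmas
lemma dpath_zero {n : ℕ} (hn : 0 < n) {a b c : ℕ} (hab : a ≤ b) (hbn : b < n) :
    dpath n hn a b c 0 = (true, ⟨a, by omega⟩) := by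
  rw [dpath_eval_lo hn hab hbn (by omega)]
  rfl

lemma dpath_last {n : ℕ} (hn : 0 < n) {a b c : ℕ} (hc : c ≤ a) (hab : a ≤ b) (hbn : b < n) :
    dpath n hn a b c (2*(b-c)+2) = (true, ⟨a, by omega⟩) := by
  rw [dpath_eval_hi hn hc hab hbn (by omega) (by omega)]
  simp only [Prod.mk.injEq, Fin.mk.injEq]
  exact ⟨trivial, by omega⟩

lemma dpath_interior {n : ℕ} (hn : 0 < n) {a b c : ℕ} (hc : c ≤ a) (hab : a ≤ b) (hbn : b < n)
    {k : ℕ} (h1 : 0 < k) (h2 : k < 2*(b-c)+2) (hna : a < n) :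
    dpath n hn a b c k ≠ (true, ⟨a, by omega⟩) := by
  intro heq
  rcases le_or_gt k (b - a) with hk | hk
  · rw [dpath_eval_lo hn hab hbn hk] at heq
    simp only [Prod.mk.injEq, Fin.mk.injEq] at heq
    omega
  · rcases le_or_gt k (2*b - a - c + 1) with hk2 | hk2
    · rw [dpath_eval_mid hn hc hab hbn hk hk2] at heq
      simp only [Prod.mk.injEq, Fin.mk.injEq] at heq
      simpa using heq.1
    · rw [dpath_eval_hi hn hc hab hbn hk2 (by omega)] at heq
      simp only [Prod.mk.injEq, Fin.mk.injEq] at heq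
      omega

lemma dpath_sj {n : ℕ} (hn : 0 < n) {a b c : ℕ} (hc : c ≤ a) (hab : a ≤ b) (hbn : b < n)
    {i : ℕ} (hi : i < 2*(b-c)+2) :
    shiftOrJump (dpath n hn a b c i) (dpath n hn a b c (i+1)) := by
  rcases lt_or_ge i (b - a) with h1 | h1
  · rw [dpath_eval_lo hn hab hbn (by omega), dpath_eval_lo hn hab hbn (by omega)]
    apply sj_shift
    simp only [Fin.val_mk]
    omega
  · rcases eq_or_lt_of_le h1 with h1' | h1'
    · rw [dpath_eval_lo hn hab hbn (by omega),
        dpath_eval_mid hn hc hab hbn (by omega) (by omega)]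
      apply sj_jump _ _ _ _ (by simp)
      simp only [Fin.mk.injEq]
      omega
    · rcases lt_or_ge i (2*b - a - c + 1) with h2 | h2
      · rw [dpath_eval_mid hn hc hab hbn (by omega) (by omega),
          dpath_eval_mid hn hc hab hbn (by omega) (by omega)]
        apply sj_shift
        simp only [Fin.val_mk]
        omega
      · rcases eq_or_lt_of_le h2 with h2' | h2'
        · rw [dpath_eval_mid hn hc hab hbn (by omega) (by omega),
            dpath_eval_hi hn hc hab hbn (by omega) (by omega)]
          apply sj_jump _ _ _ _ (by simp)
          simp only [Fin.mk.injEq]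
          omega
        · rw [dpath_eval_hi hn hc hab hbn (by omega) (by omega),
            dpath_eval_hi hn hc hab hbn (by omega) (by omega)]
          apply sj_shift
          simp only [Fin.val_mk]
          omega

lemma dpath_inj {n : ℕ} (hn : 0 < n) {a b c b' c' : ℕ} (hc : c ≤ a) (hab : a ≤ b) (hbn : b < n)
    (hc' : c' ≤ a) (hab' : a ≤ b') (hbn' : b' < n) (hd : b - c = b' - c')
    (hfun : ∀ k, k ≤ 2*(b-c)+2 → dpath n hn a b c k = dpath n hn a b' c' k) :
    b = b' ∧ c = c' := by
  have hb : b = b' := by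
    rcases lt_trichotomy b b' with h | h | h
    · exfalso
      have hk := hfun (b - a + 1) (by omega)
      rw [dpath_eval_mid hn hc hab hbn (by omega) (by omega),
        dpath_eval_lo hn hab' hbn' (by omega)] at hk
      simpa using congrArg Prod.fst hk
    · exact h
    · exfalso
      have hk := hfun (b' - a + 1) (by omega)
      rw [dpath_eval_lo hn hab hbn (by omega),
        dpath_eval_mid hn hc' hab' hbn' (by omega) (by omega)] at hk
      simpa using congrArg Prod.fst hk
  exact ⟨hb, by omega⟩

/-- starting from the basepoint `j̃ = (+1, j*)`, the probability that the
first return time `T` to `j̃` is finite and that every step of the excursion up to time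
`T` is a shift or a jump (no flips and no stationary moves) is at least `((n-1)/n)^(2n)`.
The probability is written as the (countable) sum over the return time `t + 1 ≥ 1` and
over all excursions of that length of the product of one-step transition probabilities. -/
theorem dhn_excursion_no_flip (n : ℕ) (hn : 3 ≤ n) (hodd : Odd n)
    (m : ℕ → ℝ) (hm0 : m 0 = 0) (hmtop : m (n + 1) = 0)
    (hpos : ∀ j, 1 ≤ j → j ≤ n → 0 < m j)
    (jstar : ℕ) (hj1 : 1 ≤ jstar) (hj2 : jstar ≤ n)
    (hup : ∀ j, 1 ≤ j → j < jstar → m j ≤ m (j + 1))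
    (hdown : ∀ j, jstar ≤ j → j < n → m (j + 1) ≤ m j)
    (jt : Bool × Fin n) (hjt : jt = (true, ⟨jstar - 1, by omega⟩)) :
    ((n - 1 : ℝ) / n) ^ (2 * n) ≤
      ∑' t : ℕ,
        ∑ w : Fin (t + 2) → Bool × Fin n,
          (if w 0 = jt ∧ w (Fin.last (t + 1)) = jt ∧
              (∀ l : Fin (t + 2), 0 < (l : ℕ) → (l : ℕ) < t + 1 → w l ≠ jt) ∧
              (∀ i : Fin (t + 1), shiftOrJump (w i.castSucc) (w i.succ))
           then ∏ i : Fin (t + 1), dhnP n m (w i.castSucc) (w i.succ) else 0) := by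
  have hn0 : 0 < n := by omega
  have hnr : (0:ℝ) < n := by positivity
  have hθpos : (0:ℝ) < 1/n := by positivity
  have hθ1 : (1:ℝ)/n ≤ 1 := by
    rw [div_le_one hnr]; exact_mod_cast Nat.one_le_iff_ne_zero.2 (by omega)
  have h40 : (0:ℝ) ≤ 1 - 1/n := by linarith
  have h42 : (1:ℝ) - 1/n < 1 := by linarith
  subst hjt
  set a := jstar - 1 with ha
  have han : a < n := by omega
  have hup' : ∀ j, 1 ≤ j → j ≤ a → m j ≤ m (j+1) := fun j hx1 hx2 => hup j hx1 (by omega)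
  have hdown' : ∀ j, a + 1 ≤ j → j < n → m (j+1) ≤ m j := fun j hx1 hx2 =>
    hdown j (by omega) hx2
  set jt : Bool × Fin n := (true, ⟨a, by omega⟩) with hjtdef
  -- the summand as a function of t
  set G : ℕ → ℝ := fun t => ∑ w : Fin (t + 2) → Bool × Fin n,
          (if w 0 = jt ∧ w (Fin.last (t + 1)) = jt ∧
              (∀ l : Fin (t + 2), 0 < (l : ℕ) → (l : ℕ) < t + 1 → w l ≠ jt) ∧
              (∀ i : Fin (t + 1), shiftOrJump (w i.castSucc) (w i.succ))
           then ∏ i : Fin (t + 1), dhnP n m (w i.castSucc) (w i.succ) else 0) with hG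
  have hGnonneg : ∀ t, 0 ≤ G t := by
    intro t
    apply Finset.sum_nonneg
    intro w _
    split
    · exact Finset.prod_nonneg fun i _ => dhnP_nonneg hn hm0 hmtop hpos _ _
    · rfl
  have hGle : ∀ t, G t ≤ (1 - 1/(n:ℝ))^(t+1) := by
    intro t
    refine le_trans ?_ (dhnF_le hn hm0 hmtop hpos (t+1) jt)
    rw [hG]
    unfold dhnF
    apply Finset.sum_le_sum
    intro w _
    split_ifs with hfull hweak hweak
    · exact le_refl _
    · exact absurd ⟨hfull.1, hfull.2.2.2⟩ hweak
    · exact Finset.prod_nonneg fun i _ => dhnP_nonneg hn hm0 hmtop hpos _ _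
    · exact le_refl _
  have hsummable : Summable G := by
    apply Summable.of_nonneg_of_le hGnonneg hGle
    simpa only [← pow_succ] using
      (summable_geometric_of_lt_one h40 h42).mul_right (1 - 1/(n:ℝ))
  refine le_trans ?_ (Summable.sum_le_tsum ((Finset.range n).image (fun d => 2*d+1))
    (fun t _ => hGnonneg t) hsummable)
  rw [Finset.sum_image (by intro x _ y _ h; simp only at h; omega)]
  -- per-d lower bound
  have hstep : ∀ d ∈ Finset.range n,
      ∑ p ∈ ((Finset.Icc a (n-1)) ×ˢ (Finset.Iic a)).filter (fun p => p.1 - p.2 = d),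
        (1 - 1/(n:ℝ))^(2*n) * (dA m a p.1 * dB m a p.2) ≤ G (2*d+1) := by
    intro d _
    set pairs := ((Finset.Icc a (n-1)) ×ˢ (Finset.Iic a)).filter
      (fun p : ℕ × ℕ => p.1 - p.2 = d) with hpairs
    set wfun : ℕ × ℕ → (Fin (2*d+1+2) → Bool × Fin n) :=
      fun p => fun i => dpath n hn0 a p.1 p.2 (i : ℕ) with hwfun
    set Φ : (Fin (2*d+1+2) → Bool × Fin n) → ℝ := fun w =>
          (if w 0 = jt ∧ w (Fin.last (2*d+1+1)) = jt ∧
              (∀ l : Fin (2*d+1+2), 0 < (l : ℕ) → (l : ℕ) < 2*d+1+1 → w l ≠ jt) ∧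
              (∀ i : Fin (2*d+1+1), shiftOrJump (w i.castSucc) (w i.succ))
           then ∏ i : Fin (2*d+1+1), dhnP n m (w i.castSucc) (w i.succ) else 0) with hΦ
    have hmem : ∀ p ∈ pairs, a ≤ p.1 ∧ p.1 < n ∧ p.2 ≤ a ∧ p.1 - p.2 = d := by
      intro p hp
      rw [hpairs, Finset.mem_filter, Finset.mem_product, Finset.mem_Icc, Finset.mem_Iic] at hp
      exact ⟨hp.1.1.1, by omega, hp.1.2, hp.2⟩
    have hΦnonneg : ∀ w, 0 ≤ Φ w := by
      intro w
      rw [hΦ]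
      dsimp only
      split
      · exact Finset.prod_nonneg fun i _ => dhnP_nonneg hn hm0 hmtop hpos _ _
      · rfl
    have hperp : ∀ p ∈ pairs,
        (1 - 1/(n:ℝ))^(2*n) * (dA m a p.1 * dB m a p.2) ≤ Φ (wfun p) := by
      intro p hp
      obtain ⟨hpa, hpn, hpc, hpd⟩ := hmem p hp
      have hcond : wfun p 0 = jt ∧ wfun p (Fin.last (2*d+1+1)) = jt ∧
          (∀ l : Fin (2*d+1+2), 0 < (l : ℕ) → (l : ℕ) < 2*d+1+1 → wfun p l ≠ jt) ∧
          (∀ i : Fin (2*d+1+1), shiftOrJump (wfun p i.castSucc) (wfun p i.succ)) := by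
        refine ⟨?_, ?_, ?_, ?_⟩
        · show dpath n hn0 a p.1 p.2 ((0 : Fin (2*d+1+2)) : ℕ) = jt
          rw [show ((0 : Fin (2*d+1+2)) : ℕ) = 0 from rfl]
          rw [dpath_zero hn0 hpa hpn]
        · show dpath n hn0 a p.1 p.2 ((Fin.last (2*d+1+1)) : ℕ) = jt
          rw [Fin.val_last]
          have := dpath_last hn0 hpc hpa hpn
          rw [show 2*(p.1-p.2)+2 = 2*d+1+1 by omega] at this
          rw [this]
        · intro l hl1 hl2
          show dpath n hn0 a p.1 p.2 (l : ℕ) ≠ jt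
          have := dpath_interior hn0 hpc hpa hpn hl1
            (show (l:ℕ) < 2*(p.1-p.2)+2 by omega) han
          exact this
        · intro i
          show shiftOrJump (dpath n hn0 a p.1 p.2 ((i.castSucc : Fin (2*d+1+2)) : ℕ))
            (dpath n hn0 a p.1 p.2 ((i.succ : Fin (2*d+1+2)) : ℕ))
          rw [Fin.coe_castSucc, Fin.val_succ]
          exact dpath_sj hn0 hpc hpa hpn (show (i:ℕ) < 2*(p.1-p.2)+2 by omega)
      rw [hΦ]
      dsimp only
      rw [if_pos hcond]
      have hprod : ∏ i : Fin (2*d+1+1), dhnP n m (wfun p i.castSucc) (wfun p i.succ)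
          = ∏ i ∈ Finset.range (2*(p.1-p.2)+2),
              dhnP n m (dpath n hn0 a p.1 p.2 i) (dpath n hn0 a p.1 p.2 (i+1)) := by
        rw [show 2*(p.1-p.2)+2 = 2*d+1+1 by omega]
        rw [← Fin.prod_univ_eq_prod_range
          (fun i => dhnP n m (dpath n hn0 a p.1 p.2 i) (dpath n hn0 a p.1 p.2 (i+1)))
          (2*d+1+1)]
        apply Finset.prod_congr rfl
        intro i _
        simp [hwfun]
      rw [hprod]
      exact excursion_prod_ge hn hm0 hmtop hpos hn0 a p.1 p.2 hpc hpa hpn hup' hdown'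
    have hinj : ∀ p ∈ pairs, ∀ q ∈ pairs, wfun p = wfun q → p = q := by
      intro p hp q hq hpq
      obtain ⟨hpa, hpn, hpc, hpd⟩ := hmem p hp
      obtain ⟨hqa, hqn, hqc, hqd⟩ := hmem q hq
      have heval : ∀ k, k ≤ 2*(p.1-p.2)+2 →
          dpath n hn0 a p.1 p.2 k = dpath n hn0 a q.1 q.2 k := by
        intro k hk
        have hk2 : k < 2*d+1+2 := by omega
        have := congrFun hpq ⟨k, hk2⟩
        simpa [hwfun] using this
      obtain ⟨h1, h2⟩ := dpath_inj hn0 hpc hpa hpn hqc hqa hqn (by omega) heval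
      exact Prod.ext h1 h2
    calc ∑ p ∈ pairs, (1 - 1/(n:ℝ))^(2*n) * (dA m a p.1 * dB m a p.2)
        ≤ ∑ p ∈ pairs, Φ (wfun p) := Finset.sum_le_sum hperp
      _ = ∑ w ∈ pairs.image wfun, Φ w := (Finset.sum_image hinj).symm
      _ ≤ ∑ w : Fin (2*d+1+2) → Bool × Fin n, Φ w :=
          Finset.sum_le_sum_of_subset_of_nonneg (Finset.subset_univ _)
            (fun w _ _ => hΦnonneg w)
      _ = G (2*d+1) := rfl
  refine le_trans ?_ (Finset.sum_le_sum hstep)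
  rw [Finset.sum_fiberwise_of_maps_to (fun p hp => ?_) ]
  swap
  · rw [Finset.mem_product, Finset.mem_Icc] at hp
    rw [Finset.mem_range]
    omega
  rw [← Finset.mul_sum]
  have e1 : ∑ b ∈ Finset.Icc a (n-1), dA m a b = 1 := by
    have himg : Finset.Icc a (n-1) = (Finset.range (n-a)).image (fun e => a + e) := by
      ext x
      simp only [Finset.mem_Icc, Finset.mem_image, Finset.mem_range]
      constructor
      · rintro ⟨hx1, hx2⟩; exact ⟨x - a, by omega, by omega⟩
      · rintro ⟨e, he, rfl⟩; omega
    rw [himg, Finset.sum_image (by intro x _ y _ h; simp only at h; omega)]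
    exact sum_dA hn hm0 hmtop hpos han
  have e2 : ∑ c ∈ Finset.Iic a, dB m a c = 1 := by
    have himg : Finset.Iic a = (Finset.range (a+1)).image (fun e => a - e) := by
      ext x
      simp only [Finset.mem_Iic, Finset.mem_image, Finset.mem_range]
      constructor
      · intro hx; exact ⟨a - x, by omega, by omega⟩
      · rintro ⟨e, he, rfl⟩; omega
    rw [himg, Finset.sum_image (by
      intro x hx y hy h
      simp only [Finset.coe_range, Set.mem_Iio] at hx hy h
      omega)]
    exact sum_dB hn hm0 hmtop hpos han
  have e3 : ∑ p ∈ (Finset.Icc a (n-1)) ×ˢ (Finset.Iic a), dA m a p.1 * dB m a p.2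
      = (∑ b ∈ Finset.Icc a (n-1), dA m a b) * (∑ c ∈ Finset.Iic a, dB m a c) := by
    rw [Finset.sum_mul_sum]
    rw [Finset.sum_product]
  rw [e3, e1, e2, mul_one, mul_one]
  have : ((n:ℝ) - 1)/n = 1 - 1/n := by field_simp
  rw [this]
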